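/- Let d ≥ 2 and let γ ∈ ℝ^{d×d} be symmetric with zero diagonal and with γ_{ij} > 0 for all i ≠ j, and set γ* = min_{i≠j} γ_{ij}. Let a(x) denote the matrix c(x) in the special case where all off-diagonal parameters equal 1, and let c̃(x), ã(x) denote c(x), a(x) with the d-th row and column deleted. Then for every x ∈ Δ^d the matrix c̃(x) − γ* ã(x) is positive semidefinite, and c̃(x) and ã(x) have the same rank. -/

import Mathlib

/-!
`c(x)` is the Laplacian of the complete graph with edge weights `γ_ij x_i x_j`, and `a(x)` the
one with weights `x_i x_j`; their quadratic forms are `½ Σ w_ij (v_i - v_j)²`. For `x ≥ 0` we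
have `γ* x_i x_j ≤ γ_ij x_i x_j ≤ Γ x_i x_j` with `Γ` an upper bound of `γ`, so `c - γ* a` and
`a - Γ⁻¹ c` are Laplacians with nonnegative weights, hence positive semidefinite, and so are their
principal submatrices. Two positive semidefinite matrices each dominating a positive multiple of
the other have the same kernel, hence the same rank.
-/

open Matrix Finset

section WeightedLaplacian

variable {ι : Type*} [Fintype ι] [DecidableEq ι]

/-- The Laplacian of the complete graph on `ι` with edge weights `W`; the diagonal of `W` plays
no role. -/
def weightedLaplacian (W : ι → ι → ℝ) : Matrix ι ι ℝ :=
  Matrix.of fun i j => if i = j then ∑ k ∈ univ.erase i, W i k else -W i j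

theorem weightedLaplacian_sub_smul (W U : ι → ι → ℝ) (t : ℝ) :
    weightedLaplacian W - t • weightedLaplacian U =
      weightedLaplacian fun i j => W i j - t * U i j := by
  ext i j
  by_cases h : i = j
  · simp only [weightedLaplacian, Matrix.sub_apply, Matrix.smul_apply, of_apply, if_pos h,
      smul_eq_mul, mul_sum, sum_sub_distrib]
  · simp only [weightedLaplacian, Matrix.sub_apply, Matrix.smul_apply, of_apply, if_neg h,
      smul_eq_mul]
    ring

theorem mulVec_weightedLaplacian (W : ι → ι → ℝ) (v : ι → ℝ) (i : ι) :
    (weightedLaplacian W *ᵥ v) i = ∑ j, W i j * (v i - v j) := by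
  rw [mulVec, dotProduct, ← add_sum_erase _ _ (mem_univ i),
    ← add_sum_erase _ (fun j => W i j * (v i - v j)) (mem_univ i), sub_self, mul_zero, zero_add]
  simp only [weightedLaplacian, of_apply, if_true, sum_mul]
  rw [← sum_add_distrib]
  refine sum_congr rfl fun j hj => ?_
  rw [if_neg (ne_of_mem_erase hj).symm]
  ring

variable {W : ι → ι → ℝ}

theorem isHermitian_weightedLaplacian (hW : ∀ i j, W i j = W j i) :
    (weightedLaplacian W).IsHermitian := by
  ext i j
  by_cases h : i = j
  · subst h; rfl
  · simp [weightedLaplacian, h, Ne.symm h, hW i j]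

theorem dotProduct_weightedLaplacian_mulVec (hW : ∀ i j, W i j = W j i) (v : ι → ℝ) :
    v ⬝ᵥ weightedLaplacian W *ᵥ v = (∑ i, ∑ j, W i j * (v i - v j) ^ 2) / 2 := by
  have hswap :
      ∑ i, ∑ j, W i j * v i * (v i - v j) = -∑ i, ∑ j, W i j * v j * (v i - v j) := by
    rw [sum_comm, ← sum_neg_distrib]
    refine sum_congr rfl fun i _ => ?_
    rw [← sum_neg_distrib]
    refine sum_congr rfl fun j _ => ?_
    rw [hW]; ring
  have hsq : ∑ i, ∑ j, W i j * (v i - v j) ^ 2 =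
      ∑ i, ∑ j, W i j * v i * (v i - v j) - ∑ i, ∑ j, W i j * v j * (v i - v j) := by
    rw [← sum_sub_distrib]
    refine sum_congr rfl fun i _ => ?_
    rw [← sum_sub_distrib]
    exact sum_congr rfl fun j _ => by ring
  have hform : v ⬝ᵥ weightedLaplacian W *ᵥ v = ∑ i, ∑ j, W i j * v i * (v i - v j) := by
    refine sum_congr rfl fun i _ => ?_
    rw [mulVec_weightedLaplacian, mul_sum]
    exact sum_congr rfl fun j _ => by ring
  rw [hsq, hform]
  linarith

theorem posSemidef_weightedLaplacian (hW : ∀ i j, W i j = W j i)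
    (hW_nonneg : ∀ i j, i ≠ j → 0 ≤ W i j) : (weightedLaplacian W).PosSemidef := by
  refine posSemidef_iff_dotProduct_mulVec.mpr ⟨isHermitian_weightedLaplacian hW, fun v => ?_⟩
  rw [star_trivial, dotProduct_weightedLaplacian_mulVec hW]
  refine div_nonneg (sum_nonneg fun i _ => sum_nonneg fun j _ => ?_) zero_le_two
  rcases eq_or_ne i j with rfl | hij
  · simp
  · exact mul_nonneg (hW_nonneg i j hij) (sq_nonneg _)

theorem posSemidef_weightedLaplacian_sub_smul {U : ι → ι → ℝ} {t : ℝ}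
    (hW : ∀ i j, W i j = W j i) (hU : ∀ i j, U i j = U j i)
    (hUW : ∀ i j, i ≠ j → t * U i j ≤ W i j) :
    (weightedLaplacian W - t • weightedLaplacian U).PosSemidef := by
  rw [weightedLaplacian_sub_smul]
  exact posSemidef_weightedLaplacian (fun i j => by rw [hW, hU])
    fun i j hij => sub_nonneg.mpr (hUW i j hij)

end WeightedLaplacian

theorem Matrix.rank_eq_of_mulVec_eq_zero_iff {m n K : Type*} [Fintype n] [Field K]
    {A B : Matrix m n K} (h : ∀ v, A *ᵥ v = 0 ↔ B *ᵥ v = 0) : A.rank = B.rank := by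
  have hker : LinearMap.ker A.mulVecLin = LinearMap.ker B.mulVecLin := by
    ext v
    exact h v
  have hA := LinearMap.finrank_range_add_finrank_ker A.mulVecLin
  have hB := LinearMap.finrank_range_add_finrank_ker B.mulVecLin
  rw [hker] at hA
  unfold Matrix.rank
  omega

section LoewnerComparable

open scoped ComplexOrder

variable {n 𝕜 : Type*} [Fintype n] [RCLike 𝕜]

theorem Matrix.PosSemidef.mulVec_eq_zero_of_sub_smul {A B : Matrix n n 𝕜} {t : ℝ}
    (hB : B.PosSemidef) (hAB : (A - t • B).PosSemidef) (ht : 0 < t) {v : n → 𝕜}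
    (hv : A *ᵥ v = 0) : B *ᵥ v = 0 := by
  rw [← hB.dotProduct_mulVec_zero_iff]
  have hle := (posSemidef_iff_dotProduct_mulVec.mp hAB).2 v
  rw [sub_mulVec, hv, smul_mulVec, zero_sub, dotProduct_neg, dotProduct_smul,
    neg_nonneg] at hle
  have hge : 0 ≤ t • (star v ⬝ᵥ B *ᵥ v) :=
    smul_nonneg ht.le ((posSemidef_iff_dotProduct_mulVec.mp hB).2 v)
  exact (smul_eq_zero.mp (le_antisymm hle hge)).resolve_left ht.ne'

theorem Matrix.PosSemidef.rank_eq_of_sub_smul {A B : Matrix n n 𝕜} {s t : ℝ}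
    (hA : A.PosSemidef) (hB : B.PosSemidef) (hAB : (A - s • B).PosSemidef) (hBA : (B - t • A).PosSemidef) (hs : 0 < s) (ht : 0 < t) :
    A.rank = B.rank :=
  rank_eq_of_mulVec_eq_zero_iff fun _ =>
    ⟨hB.mulVec_eq_zero_of_sub_smul hAB hs, hA.mulVec_eq_zero_of_sub_smul hBA ht⟩

end LoewnerComparable

theorem statement9_general (d : ℕ)
    (γ : Fin d → Fin d → ℝ)
    (hγsymm : ∀ i j, γ i j = γ j i)
    (hγpos : ∀ i j, i ≠ j → 0 < γ i j)
    (γstar : ℝ)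
    (hγstar_le : ∀ i j, i ≠ j → γstar ≤ γ i j)
    (hγstar_mem : ∃ i j, i ≠ j ∧ γstar = γ i j)
    (c a : (Fin d → ℝ) → Matrix (Fin d) (Fin d) ℝ)
    (hc : ∀ x i j, c x i j =
      if i = j then ∑ k ∈ Finset.univ.erase i, γ i k * x i * x k
      else -(γ i j * x i * x j))
    (ha : ∀ x i j, a x i j =
      if i = j then ∑ k ∈ Finset.univ.erase i, x i * x k
      else -(x i * x j))
    (x : Fin d → ℝ) (hx : x ∈ stdSimplex ℝ (Fin d)) :
    ((c x).submatrix (Fin.castLE (Nat.sub_le d 1)) (Fin.castLE (Nat.sub_le d 1)) -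
        γstar • (a x).submatrix (Fin.castLE (Nat.sub_le d 1)) (Fin.castLE (Nat.sub_le d 1))).PosSemidef ∧
      ((c x).submatrix (Fin.castLE (Nat.sub_le d 1)) (Fin.castLE (Nat.sub_le d 1))).rank =
        ((a x).submatrix (Fin.castLE (Nat.sub_le d 1)) (Fin.castLE (Nat.sub_le d 1))).rank := by
  set W : Fin d → Fin d → ℝ := fun i j => γ i j * x i * x j
  set U : Fin d → Fin d → ℝ := fun i j => x i * x j
  have hW : ∀ i j, W i j = W j i := fun i j => by simp only [W, hγsymm i j]; ring
  have hU : ∀ i j, U i j = U j i := fun i j => mul_comm _ _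
  have hcW : c x = weightedLaplacian W := by ext i j; rw [hc]; rfl
  have haU : a x = weightedLaplacian U := by ext i j; rw [ha]; rfl
  have hU_nonneg : ∀ i j, 0 ≤ U i j := fun i j => mul_nonneg (hx.1 i) (hx.1 j)
  obtain ⟨i₀, j₀, hij₀, hγstar⟩ := hγstar_mem
  have hγstar_pos : 0 < γstar := hγstar ▸ hγpos i₀ j₀ hij₀
  obtain ⟨M, hM⟩ := Finite.exists_le fun p : Fin d × Fin d => γ p.1 p.2
  have hM_pos : 0 < max M 1 := lt_max_of_lt_right one_pos
  have hWU : (weightedLaplacian W - γstar • weightedLaplacian U).PosSemidef :=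
    posSemidef_weightedLaplacian_sub_smul hW hU fun i j hij => by
      simpa only [W, U, mul_assoc] using
        mul_le_mul_of_nonneg_right (hγstar_le i j hij) (hU_nonneg i j)
  have hUW : (weightedLaplacian U - (max M 1)⁻¹ • weightedLaplacian W).PosSemidef :=
    posSemidef_weightedLaplacian_sub_smul hU hW fun i j _ => by
      have hγ_le : (max M 1)⁻¹ * γ i j ≤ 1 := by
        rw [inv_mul_le_iff₀ hM_pos, mul_one]
        exact (hM (i, j)).trans (le_max_left _ _)
      simpa only [W, U, mul_assoc, one_mul] using
        mul_le_mul_of_nonneg_right hγ_le (hU_nonneg i j)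
  have hW_psd : (weightedLaplacian W).PosSemidef :=
    posSemidef_weightedLaplacian hW fun i j hij => by
      simpa only [W, U, mul_assoc] using mul_nonneg (hγpos i j hij).le (hU_nonneg i j)
  have hU_psd : (weightedLaplacian U).PosSemidef :=
    posSemidef_weightedLaplacian hU fun i j _ => hU_nonneg i j
  rw [hcW, haU]
  exact ⟨hWU.submatrix _, (hW_psd.submatrix _).rank_eq_of_sub_smul (hU_psd.submatrix _)
    (hWU.submatrix _) (hUW.submatrix _) hγstar_pos (inv_pos.mpr hM_pos)⟩

/-- with `γ* = min_{i≠j} γ_{ij} > 0`, for every `x ∈ Δ^d` the matrix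
`c̃(x) − γ* ã(x)` is positive semidefinite and `c̃(x)`, `ã(x)` have the same rank; here
`ã` corresponds to the parameter choice `γ_{ij} = 1` for all `i ≠ j`, and the tilde means
deleting the `d`-th row and column. -/
theorem statement9 (d : ℕ) (hd : 2 ≤ d)
    (γ : Fin d → Fin d → ℝ)
    (hγsymm : ∀ i j, γ i j = γ j i) (hγdiag : ∀ i, γ i i = 0)
    (hγpos : ∀ i j, i ≠ j → 0 < γ i j)
    (γstar : ℝ)
    (hγstar_le : ∀ i j, i ≠ j → γstar ≤ γ i j)
    (hγstar_mem : ∃ i j, i ≠ j ∧ γstar = γ i j)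
    (c a : (Fin d → ℝ) → Matrix (Fin d) (Fin d) ℝ)
    (hc : ∀ x i j, c x i j =
      if i = j then ∑ k ∈ Finset.univ.erase i, γ i k * x i * x k
      else -(γ i j * x i * x j))
    (ha : ∀ x i j, a x i j =
      if i = j then ∑ k ∈ Finset.univ.erase i, x i * x k
      else -(x i * x j))
    (x : Fin d → ℝ) (hx : x ∈ stdSimplex ℝ (Fin d)) :
    ((c x).submatrix (Fin.castLE (Nat.sub_le d 1)) (Fin.castLE (Nat.sub_le d 1)) -
        γstar • (a x).submatrix (Fin.castLE (Nat.sub_le d 1)) (Fin.castLE (Nat.sub_le d 1))).PosSemidef ∧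
      ((c x).submatrix (Fin.castLE (Nat.sub_le d 1)) (Fin.castLE (Nat.sub_le d 1))).rank =
        ((a x).submatrix (Fin.castLE (Nat.sub_le d 1)) (Fin.castLE (Nat.sub_le d 1))).rank :=
  statement9_general d γ hγsymm hγpos γstar hγstar_le hγstar_mem c a hc ha x hx
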